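/- Let G be a finite nilpotent group and b, c elements of G of coprime orders with bc = cb. Set a = bc. Then for any positive integer n, a is n-Engel in G if and only if both b and c are n-Engel in G. -/

import Mathlib

/-!
A finite nilpotent group is the direct product of its Sylow subgroups, and the Engel condition
can be checked coordinatewise. In each Sylow coordinate one of `b`, `c` is trivial, since a
nontrivial element of a `p`-group has order divisible by `p` and the orders of `b` and `c` are
coprime. So in every coordinate `a = b * c` equals `b` or `c`, and the other factor is trivially
`n`-Engel.
-/

open scoped commutatorElement

/-- The left-normed iterated commutator `[x, y, y, ..., y]` with `n` copies of `y`. -/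
def engelComm {G : Type*} [Group G] (x y : G) : ℕ → G
  | 0 => x
  | n + 1 => ⁅engelComm x y n, y⁆

def IsEngel {G : Type*} [Group G] (n : ℕ) (y : G) : Prop :=
  ∀ x : G, engelComm x y n = 1

section Engel

variable {G H : Type*} [Group G] [Group H] {n : ℕ}

lemma map_engelComm {F : Type*} [FunLike F G H] [MonoidHomClass F G H] (f : F) (x y : G)
    (n : ℕ) : f (engelComm x y n) = engelComm (f x) (f y) n := by
  induction n with
  | zero => rfl
  | succ n ih => simp only [engelComm, map_commutatorElement, ih]

lemma engelComm_one_right (x : G) (hn : n ≠ 0) : engelComm x 1 n = 1 := by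
  obtain ⟨n, rfl⟩ := Nat.exists_eq_succ_of_ne_zero hn
  exact commutatorElement_one_right _

lemma isEngel_one (hn : n ≠ 0) : IsEngel n (1 : G) :=
  fun x => engelComm_one_right x hn

lemma MulEquiv.isEngel_apply_iff (e : G ≃* H) {y : G} : IsEngel n (e y) ↔ IsEngel n y := by
  refine ⟨fun h x => e.injective ?_, fun h x => ?_⟩
  · rw [map_engelComm, h, map_one]
  · rw [← e.apply_symm_apply x, ← map_engelComm, h, map_one]

lemma engelComm_apply {ι : Type*} {H : ι → Type*} [∀ i, Group (H i)] (x y : ∀ i, H i) (n : ℕ)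
    (i : ι) : engelComm x y n i = engelComm (x i) (y i) n :=
  map_engelComm (Pi.evalMonoidHom H i) x y n

lemma isEngel_pi_iff {ι : Type*} [DecidableEq ι] {H : ι → Type*} [∀ i, Group (H i)]
    {y : ∀ i, H i} : IsEngel n y ↔ ∀ i, IsEngel n (y i) := by
  refine ⟨fun h i x => ?_, fun h x => funext fun i => ?_⟩
  · simpa [engelComm_apply] using congrFun (h (Pi.mulSingle i x)) i
  · rw [engelComm_apply, h i (x i), Pi.one_apply]

lemma isEngel_mul_iff_of_eq_one_or {y z : G} (hn : n ≠ 0) (hyz : y = 1 ∨ z = 1) :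
    IsEngel n (y * z) ↔ IsEngel n y ∧ IsEngel n z := by
  rcases hyz with rfl | rfl <;> simp [isEngel_one hn]

end Engel

lemma IsPGroup.map_eq_one_or_map_eq_one {p : ℕ} [Fact p.Prime] {G H : Type*} [Group G]
    [Group H] (hH : IsPGroup p H) (f : G →* H) {b c : G}
    (hcop : (orderOf b).Coprime (orderOf c)) : f b = 1 ∨ f c = 1 := by
  by_contra! h
  have hpb : p ∣ orderOf b := (hH.dvd_orderOf h.1).trans (orderOf_map_dvd f b)
  have hpc : p ∣ orderOf c := (hH.dvd_orderOf h.2).trans (orderOf_map_dvd f c)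
  exact (Fact.out : p.Prime).not_dvd_one (hcop ▸ Nat.dvd_gcd hpb hpc)

theorem stmt2_general {G : Type*} [Group G] [Finite G] (hG : Group.IsNilpotent G)
    (b c : G) (hcop : (orderOf b).Coprime (orderOf c))
    (a : G) (ha : a = b * c) (n : ℕ) (hn : 0 < n) :
    (∀ x : G, engelComm x a n = 1) ↔
      ((∀ x : G, engelComm x b n = 1) ∧ (∀ x : G, engelComm x c n = 1)) := by
  obtain ⟨e⟩ := ((Group.isNilpotent_of_finite_tfae (G := G)).out 0 4).mp hG
  have hsplit : ∀ (p : (Nat.card G).primeFactors) (P : Sylow p G),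
      e.symm b p P = 1 ∨ e.symm c p P = 1 := by
    intro p P
    have : Fact (p : ℕ).Prime := ⟨Nat.prime_of_mem_primeFactors p.2⟩
    exact P.isPGroup'.map_eq_one_or_map_eq_one
      ((Pi.evalMonoidHom _ P).comp ((Pi.evalMonoidHom _ p).comp e.symm.toMonoidHom)) hcop
  change IsEngel n a ↔ IsEngel n b ∧ IsEngel n c
  classical
  simp only [← e.symm.isEngel_apply_iff, isEngel_pi_iff, ha, map_mul, Pi.mul_apply, ← forall_and]
  exact forall₂_congr fun p P => isEngel_mul_iff_of_eq_one_or hn.ne' (hsplit p P)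

theorem stmt2 {G : Type*} [Group G] [Finite G] (hG : Group.IsNilpotent G)
    (b c : G) (hbc : Commute b c) (hcop : (orderOf b).Coprime (orderOf c))
    (a : G) (ha : a = b * c) (n : ℕ) (hn : 0 < n) :
    (∀ x : G, engelComm x a n = 1) ↔
      ((∀ x : G, engelComm x b n = 1) ∧ (∀ x : G, engelComm x c n = 1)) :=
  stmt2_general hG b c hcop a ha n hn
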